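/- arXiv:2506.13337 — 3 statements merged into one kernel-verified Lean document; each statement's English description precedes it below -/
import Mathlib

section
/- For the anti-Pell numbers (a = (1,2)), writing B^1_n = B_{2n-1} and B^2_n = B_{2n}, one has B^2_n = ⌊(A_n + 2)/3⌋ for all n ≥ 1. -/
/-- `A` and `B` (indexed from 1) are complementary strictly increasing sequences
of positive integers: every positive integer lies in exactly one of their ranges. -/
def CompPair (A B : ℕ → ℕ) : Prop :=
  StrictMonoOn A (Set.Ici 1) ∧ StrictMonoOn B (Set.Ici 1) ∧
  (∀ n, 1 ≤ n → 1 ≤ A n) ∧ (∀ n, 1 ≤ n → 1 ≤ B n) ∧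
  ∀ m, 1 ≤ m →
    ((∃ n, 1 ≤ n ∧ A n = m) ∧ ¬(∃ n, 1 ≤ n ∧ B n = m)) ∨
    (¬(∃ n, 1 ≤ n ∧ A n = m) ∧ (∃ n, 1 ≤ n ∧ B n = m))

/-- `(A, B)` is the anti-recurrence pair for the positive linear form `a` of dimension `k`:
`A n = Σ_{j=1}^k a_j * B_{(n-1)k+j}` for all `n ≥ 1`. -/
def AntiRec (k : ℕ) (a : Fin k → ℕ) (A B : ℕ → ℕ) : Prop :=
  CompPair A B ∧
  ∀ n, 1 ≤ n → A n = ∑ j : Fin k, a j * B ((n - 1) * k + (j : ℕ) + 1)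

/-!
Since `B` is increasing, `B (2n-1) < B (2n)`. The values strictly between two consecutive
`B`-values belong to `A`, and `A n = B (2n-1) + 2 B (2n)` forces consecutive `A`-values to
differ by at least `3`; hence at most one integer lies strictly between `B (2n-1)` and `B (2n)`.
So `A n = 3 B (2n) - d` with `d ∈ {1, 2}`, and `(A n + 2) / 3 = B (2n)`.
-/

namespace CompPair

variable {A B : ℕ → ℕ}

theorem exists_A_eq_of_lt_of_lt (h : CompPair A B) {k m : ℕ} (hk : 1 ≤ k)
    (hkm : B k < m) (hmk : m < B (k + 1)) : ∃ i, 1 ≤ i ∧ A i = m := by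
  obtain ⟨-, hB, -, -, hcomp⟩ := h
  have hm : 1 ≤ m := by omega
  rcases hcomp m hm with ⟨hA, -⟩ | ⟨-, l, hl, rfl⟩
  · exact hA
  · have hkl := hB.lt_iff_lt (Set.mem_Ici.2 hk) (Set.mem_Ici.2 hl)
    have hlk := hB.lt_iff_lt (Set.mem_Ici.2 hl) (Set.mem_Ici.2 (by omega : 1 ≤ k + 1))
    omega

theorem B_succ_le_add_two (h : CompPair A B)
    (hgap : ∀ i j, 1 ≤ i → i < j → A i + 1 < A j) {k : ℕ} (hk : 1 ≤ k) :
    B (k + 1) ≤ B k + 2 := by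
  by_contra! hlt
  obtain ⟨i, hi, hAi⟩ := h.exists_A_eq_of_lt_of_lt hk (m := B k + 1) (by omega) (by omega)
  obtain ⟨j, hj, hAj⟩ := h.exists_A_eq_of_lt_of_lt hk (m := B k + 2) (by omega) (by omega)
  have hij : i < j := (h.1.lt_iff_lt (Set.mem_Ici.2 hi) (Set.mem_Ici.2 hj)).1 (by omega)
  have := hgap i j hi hij
  omega

end CompPair

namespace AntiRec

variable {A B : ℕ → ℕ}

theorem antiPell_apply (h : AntiRec 2 ![1, 2] A B) {n : ℕ} (hn : 1 ≤ n) :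
    A n = B (2 * n - 1) + 2 * B (2 * n) := by
  have hrec := h.2 n hn
  simp only [Fin.sum_univ_two, Matrix.cons_val_zero, Matrix.cons_val_one, Fin.val_zero,
    Fin.val_one, one_mul] at hrec
  rw [hrec, show (n - 1) * 2 + 0 + 1 = 2 * n - 1 by omega,
    show 2 * n - 1 + 1 = 2 * n by omega]

theorem antiPell_add_three_le (h : AntiRec 2 ![1, 2] A B) {i j : ℕ} (hi : 1 ≤ i)
    (hij : i < j) : A i + 3 ≤ A j := by
  have hB := h.1.2.1
  have hodd := hB (Set.mem_Ici.2 (by omega : 1 ≤ 2 * i - 1))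
    (Set.mem_Ici.2 (by omega : 1 ≤ 2 * j - 1)) (by omega : 2 * i - 1 < 2 * j - 1)
  have heven := hB (Set.mem_Ici.2 (by omega : 1 ≤ 2 * i))
    (Set.mem_Ici.2 (by omega : 1 ≤ 2 * j)) (by omega : 2 * i < 2 * j)
  rw [h.antiPell_apply hi, h.antiPell_apply (hi.trans hij.le)]
  omega

end AntiRec

/-- For the anti-Pell numbers, B²_n = ⌊(A_n + 2)/3⌋. -/
theorem stmt5 (A B : ℕ → ℕ) (h : AntiRec 2 ![1, 2] A B) :
    ∀ n, 1 ≤ n → B (2 * n) = (A n + 2) / 3 := by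
  intro n hn
  have hodd : 1 ≤ 2 * n - 1 := by omega
  have hsucc : 2 * n - 1 + 1 = 2 * n := by omega
  have hlt : B (2 * n - 1) < B (2 * n) :=
    h.1.2.1 (Set.mem_Ici.2 hodd) (Set.mem_Ici.2 (by omega)) (by omega)
  have hgap : ∀ i j, 1 ≤ i → i < j → A i + 1 < A j := fun i j hi hij => by
    have := h.antiPell_add_three_le hi hij
    omega
  have hle : B (2 * n) ≤ B (2 * n - 1) + 2 := hsucc ▸ h.1.B_succ_le_add_two hgap hodd
  have := h.antiPell_apply hn
  omega
end

section
/- Let (A_n) be the anti-recurrence sequence for a = (2,1) (the anti-Jacobsthal numbers, OEIS A304499). Then 0 ≤ A_n - 7n + 4 ≤ 3 for all n ≥ 1. -/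
open Finset

section Counting

variable {f : ℕ → ℕ}

theorem le_apply_of_strictMonoOn_Ici (hf : StrictMonoOn f (Set.Ici 1)) (h1 : 1 ≤ f 1)
    {i : ℕ} (hi : 1 ≤ i) : i ≤ f i := by
  induction i, hi using Nat.le_induction with
  | base => exact h1
  | succ k hk ih => exact ih.trans_lt (hf hk (by simp) k.lt_succ_self)

/-- Indices are drawn from `Icc 1 M` only, which loses nothing once `i ≤ f i`. -/
def countLE (f : ℕ → ℕ) (M : ℕ) : ℕ := #{i ∈ Icc 1 M | f i ≤ M}

theorem countLE_le (hf : MonotoneOn f (Set.Ici 1)) {t M : ℕ} (h : M < f (t + 1)) :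
    countLE f M ≤ t := by
  have hsub : {i ∈ Icc 1 M | f i ≤ M} ⊆ Icc 1 t := by
    intro i hi
    simp only [mem_filter, mem_Icc] at hi ⊢
    refine ⟨hi.1.1, ?_⟩
    by_contra! hti
    have := hf (by simp) (by simp; omega) (by omega : t + 1 ≤ i)
    omega
  simpa [countLE] using card_le_card hsub

theorem le_countLE (hf : StrictMonoOn f (Set.Ici 1)) (h1 : 1 ≤ f 1) {t M : ℕ} (ht : 1 ≤ t)
    (h : f t ≤ M) : t ≤ countLE f M := by
  have hsub : Icc 1 t ⊆ {i ∈ Icc 1 M | f i ≤ M} := by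
    intro i hi
    simp only [mem_Icc] at hi
    have hfi : f i ≤ f t := hf.monotoneOn (Set.mem_Ici.2 hi.1) (Set.mem_Ici.2 ht) hi.2
    have hif : i ≤ f i := le_apply_of_strictMonoOn_Ici hf h1 hi.1
    simp only [mem_filter, mem_Icc]
    omega
  simpa [countLE] using card_le_card hsub

open scoped Classical in
theorem countLE_eq_card_range (hf : StrictMonoOn f (Set.Ici 1)) (h1 : 1 ≤ f 1) (M : ℕ) :
    countLE f M = #{m ∈ Icc 1 M | ∃ i, 1 ≤ i ∧ f i = m} := by
  refine card_bij (fun i _ => f i) ?_ ?_ ?_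
  · intro i hi
    simp only [mem_filter, mem_Icc] at hi ⊢
    have := le_apply_of_strictMonoOn_Ici hf h1 hi.1.1
    exact ⟨⟨by omega, hi.2⟩, i, hi.1.1, rfl⟩
  · intro i hi i' hi' hii'
    simp only [mem_filter, mem_Icc] at hi hi'
    exact hf.injOn (Set.mem_Ici.2 hi.1.1) (Set.mem_Ici.2 hi'.1.1) hii'
  · intro m hm
    simp only [mem_filter, mem_Icc] at hm
    obtain ⟨⟨hm1, hmM⟩, i, hi, rfl⟩ := hm
    have := le_apply_of_strictMonoOn_Ici hf h1 hi
    exact ⟨i, by simp only [mem_filter, mem_Icc]; omega, rfl⟩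

end Counting

namespace CompPair

variable {A B : ℕ → ℕ}

theorem countLE_add_countLE (h : CompPair A B) (M : ℕ) : countLE A M + countLE B M = M := by
  classical
  obtain ⟨hA, hB, hA1, hB1, hcomp⟩ := h
  rw [countLE_eq_card_range hA (hA1 1 le_rfl), countLE_eq_card_range hB (hB1 1 le_rfl)]
  have hB_eq_notA : {m ∈ Icc 1 M | ∃ i, 1 ≤ i ∧ B i = m}
      = {m ∈ Icc 1 M | ¬∃ i, 1 ≤ i ∧ A i = m} := by
    refine filter_congr fun m hm => ?_
    rcases hcomp m (mem_Icc.1 hm).1 with ⟨hAm, hBm⟩ | ⟨hAm, hBm⟩ <;> simp [hAm, hBm]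
  rw [hB_eq_notA, card_filter_add_card_filter_not]
  simp

theorem countLE_apply_add (h : CompPair A B) {j : ℕ} (hj : 1 ≤ j) :
    countLE A (B j) + j = B j := by
  have hcountB : countLE B (B j) = j :=
    le_antisymm (countLE_le h.2.1.monotoneOn (h.2.1 hj (by simp) j.lt_succ_self))
      (le_countLE h.2.1 (h.2.2.2.1 1 le_rfl) hj le_rfl)
  have := h.countLE_add_countLE (B j)
  omega

theorem countLE_le_of_le_add (h : CompPair A B) {n b : ℕ} (hn : 1 ≤ n)
    (hlow : ∀ i, 1 ≤ i → i < n → 7 * i ≤ A i + 4) (hb : b < A n) :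
    countLE A b ≤ (b + 4) / 7 := by
  refine countLE_le h.1.monotoneOn ?_
  rcases lt_or_ge ((b + 4) / 7 + 1) n with hlt | hge
  · have := hlow _ (by omega) hlt
    omega
  · have := h.1.monotoneOn (Set.mem_Ici.2 hn) (Set.mem_Ici.2 (by omega)) hge
    omega

theorem le_countLE_of_add_le (h : CompPair A B) {n b : ℕ}
    (hup : ∀ i, 1 ≤ i → i < n → A i + 1 ≤ 7 * i) (hb : b + 1 < 7 * n) :
    (b + 1) / 7 ≤ countLE A b := by
  rcases Nat.eq_zero_or_pos ((b + 1) / 7) with hs | hs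
  · omega
  · exact le_countLE h.1 (h.2.2.1 1 le_rfl) hs (by have := hup _ hs (by omega); omega)

theorem six_mul_apply_bounds (h : CompPair A B) {n : ℕ} (hn : 1 ≤ n)
    (ih : ∀ i, 1 ≤ i → i < n → 7 * i ≤ A i + 4 ∧ A i + 1 ≤ 7 * i)
    {j : ℕ} (hj : 1 ≤ j) (hjn : j ≤ 2 * n) (hlt : B j < A n) :
    6 * B j ≤ 7 * j + 4 ∧ 7 * j ≤ 6 * B j + 5 := by
  have hB := h.countLE_apply_add hj
  have hupper := h.countLE_le_of_le_add hn (fun i hi hin => (ih i hi hin).1) hlt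
  have hlower := h.le_countLE_of_add_le (b := B j) (fun i hi hin => (ih i hi hin).2)
    (by omega)
  omega

end CompPair

theorem AntiRec.apply_eq {A B : ℕ → ℕ} (h : AntiRec 2 ![2, 1] A B) {n : ℕ} (hn : 1 ≤ n) :
    A n = 2 * B (2 * n - 1) + B (2 * n) := by
  have := h.2 n hn
  simp only [Fin.sum_univ_two, Matrix.cons_val_zero, Matrix.cons_val_one, Fin.val_zero,
    Fin.val_one] at this
  rw [this, show (n - 1) * 2 + 1 + 1 = 2 * n by omega,
    show (n - 1) * 2 + 0 + 1 = 2 * n - 1 by omega, one_mul]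

theorem AntiRec.bounds {A B : ℕ → ℕ} (h : AntiRec 2 ![2, 1] A B) :
    ∀ n, 1 ≤ n → 7 * n ≤ A n + 4 ∧ A n + 1 ≤ 7 * n := by
  intro n
  induction n using Nat.strong_induction_on with
  | _ n ih =>
    intro hn
    have hA := h.apply_eq hn
    have hB_lt : ∀ j, 1 ≤ j → j ≤ 2 * n → B j < A n := fun j hj hjn => by
      have := h.1.2.1.monotoneOn (Set.mem_Ici.2 hj) (Set.mem_Ici.2 (by omega)) hjn
      have := h.1.2.2.2.1 (2 * n - 1) (by omega)
      omega
    have hodd := h.1.six_mul_apply_bounds hn (fun i hi hin => ih i hin hi)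
      (j := 2 * n - 1) (by omega) (by omega) (hB_lt _ (by omega) (by omega))
    have heven := h.1.six_mul_apply_bounds hn (fun i hi hin => ih i hin hi)
      (j := 2 * n) (by omega) le_rfl (hB_lt _ (by omega) le_rfl)
    omega

/-- Kimberling's bounds on the anti-Jacobsthal numbers: 0 ≤ A n - 7n + 4 ≤ 3. -/
theorem stmt6 (A B : ℕ → ℕ) (h : AntiRec 2 ![2, 1] A B) :
    ∀ n, 1 ≤ n → 0 ≤ (A n : ℤ) - 7 * n + 4 ∧ (A n : ℤ) - 7 * n + 4 ≤ 3 := by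
  intro n hn
  have := h.bounds n hn
  omega
end

section
/- Let a be an A_1-bounded positive integer vector of dimension k > 1 with trace τ and κ = kτ + 1. Then for every n ≥ 1, A_n modulo κ lies in the interval [A_1 - τ + 1, A_1 + τ - 1]; in particular A_n - κ(n-1) ∈ [A_1 - τ + 1, A_1 + τ - 1]. -/
open Finset

section WeightedSum

variable {ι : Type*} (s : Finset ι) (a c : ι → ℕ) (n : ℕ)

theorem lt_sum_mul_add_sum (hτ : 0 < ∑ j ∈ s, a j) (hc : ∀ j ∈ s, n / ∑ j ∈ s, a j ≤ c j) :
    n < ∑ j ∈ s, a j * c j + ∑ j ∈ s, a j := by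
  set τ := ∑ j ∈ s, a j
  calc n < n / τ * τ + τ := Nat.lt_div_mul_add hτ
    _ = ∑ j ∈ s, a j * (n / τ) + τ := by rw [← sum_mul, mul_comm]
    _ ≤ ∑ j ∈ s, a j * c j + τ := by gcongr with j hj; exact hc j hj

theorem sum_mul_lt_add_sum (hc : ∀ j ∈ s, c j ≤ n / ∑ j ∈ s, a j + 1)
    (hdvd : (∑ j ∈ s, a j) ∣ n → ∃ j ∈ s, 0 < a j ∧ c j ≤ n / ∑ j ∈ s, a j) :
    ∑ j ∈ s, a j * c j < n + ∑ j ∈ s, a j := by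
  set τ := ∑ j ∈ s, a j
  have hsum : ∑ j ∈ s, a j * (n / τ + 1) = τ * (n / τ) + τ := by rw [← sum_mul]; ring
  have hle : τ * (n / τ) ≤ n := Nat.mul_div_le n τ
  by_cases hτn : τ ∣ n
  · obtain ⟨j₀, hj₀, ha, hc₀⟩ := hdvd hτn
    have hlt : ∑ j ∈ s, a j * c j < ∑ j ∈ s, a j * (n / τ + 1) :=
      sum_lt_sum (fun j hj => Nat.mul_le_mul_left _ (hc j hj))
        ⟨j₀, hj₀, Nat.mul_lt_mul_of_pos_left (by omega) ha⟩
    omega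
  · have hne : τ * (n / τ) ≠ n := fun h => hτn ⟨n / τ, h.symm⟩
    have : ∑ j ∈ s, a j * c j ≤ ∑ j ∈ s, a j * (n / τ + 1) :=
      sum_le_sum fun j hj => Nat.mul_le_mul_left _ (hc j hj)
    omega

end WeightedSum

section ValueCount

open scoped Classical

noncomputable def valueCount (S : ℕ → ℕ) (N : ℕ) : ℕ :=
  #{x ∈ Icc 1 N | ∃ i, 1 ≤ i ∧ S i = x}

variable {S : ℕ → ℕ}

theorem le_valueCount_iff (hS : StrictMonoOn S (Set.Ici 1)) (hpos : ∀ i, 1 ≤ i → 1 ≤ S i)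
    {t : ℕ} (ht : 1 ≤ t) (N : ℕ) : t ≤ valueCount S N ↔ S t ≤ N := by
  constructor
  · intro hcount
    by_contra! hN
    have hsub : {x ∈ Icc 1 N | ∃ i, 1 ≤ i ∧ S i = x} ⊆ (Ico 1 t).image S := by
      intro x hx
      obtain ⟨hxN, i, hi, rfl⟩ := by simpa only [mem_filter, mem_Icc] using hx
      have hit : i < t := by
        by_contra! hti
        have := hS.monotoneOn (Set.mem_Ici.2 ht) (Set.mem_Ici.2 hi) hti
        omega
      exact mem_image.2 ⟨i, mem_Ico.2 ⟨hi, hit⟩, rfl⟩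
    have := (card_le_card hsub).trans card_image_le
    rw [Nat.card_Ico] at this
    unfold valueCount at hcount
    omega
  · intro hN
    have hsub : (Icc 1 t).image S ⊆ {x ∈ Icc 1 N | ∃ i, 1 ≤ i ∧ S i = x} := by
      intro x hx
      obtain ⟨i, hi, rfl⟩ := mem_image.1 hx
      rw [mem_Icc] at hi
      have := hS.monotoneOn (Set.mem_Ici.2 hi.1) (Set.mem_Ici.2 ht) hi.2
      simp only [mem_filter, mem_Icc]
      exact ⟨⟨hpos i hi.1, this.trans hN⟩, i, hi.1, rfl⟩
    have := card_le_card hsub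
    rw [card_image_of_injOn (hS.injOn.mono fun i hi => by simp_all), Nat.card_Icc] at this
    unfold valueCount
    omega

theorem valueCount_le_iff (hS : StrictMonoOn S (Set.Ici 1)) (hpos : ∀ i, 1 ≤ i → 1 ≤ S i)
    (t N : ℕ) : valueCount S N ≤ t ↔ N < S (t + 1) := by
  have := le_valueCount_iff hS hpos (Nat.le_add_left 1 t) N
  omega

theorem valueCount_eq_of_le_of_lt (hS : StrictMonoOn S (Set.Ici 1))
    (hpos : ∀ i, 1 ≤ i → 1 ≤ S i) {t N : ℕ} (ht : 1 ≤ t) (hle : S t ≤ N) (hlt : N < S (t + 1)) :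
    valueCount S N = t :=
  le_antisymm ((valueCount_le_iff hS hpos t N).2 hlt) ((le_valueCount_iff hS hpos ht N).2 hle)

end ValueCount

namespace CompPair

variable {A B : ℕ → ℕ}

theorem symm (h : CompPair A B) : CompPair B A := by
  obtain ⟨hA, hB, hApos, hBpos, hdich⟩ := h
  exact ⟨hB, hA, hBpos, hApos, fun m hm => (hdich m hm).symm.imp And.symm And.symm⟩

theorem ne (h : CompPair A B) {i t : ℕ} (hi : 1 ≤ i) (ht : 1 ≤ t) : A i ≠ B t := by
  intro he
  rcases h.2.2.2.2 (A i) (h.2.2.1 i hi) with ⟨_, hB⟩ | ⟨hA, _⟩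
  · exact hB ⟨t, ht, he.symm⟩
  · exact hA ⟨i, hi, rfl⟩

open scoped Classical in
theorem valueCount_add (h : CompPair A B) (N : ℕ) : valueCount A N + valueCount B N = N := by
  unfold valueCount
  have hB : {x ∈ Icc 1 N | ∃ i, 1 ≤ i ∧ B i = x} = {x ∈ Icc 1 N | ¬∃ i, 1 ≤ i ∧ A i = x} :=
    filter_congr fun x hx => by
      rcases h.2.2.2.2 x (mem_Icc.1 hx).1 with ⟨hA, hB⟩ | ⟨hA, hB⟩
      · exact iff_of_false hB (not_not.2 hA)
      · exact iff_of_true hB hA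
  rw [hB, card_filter_add_card_filter_not, Nat.card_Icc, Nat.add_sub_cancel]

theorem eq_add_valueCount (h : CompPair A B) {t : ℕ} (ht : 1 ≤ t) :
    A t = t + valueCount B (A t) := by
  have := h.valueCount_add (A t)
  have := valueCount_eq_of_le_of_lt h.1 h.2.2.1 ht le_rfl
    (h.1 (Set.mem_Ici.2 ht) (by simp) (by omega))
  omega

theorem lt_iff_lt_add (h : CompPair A B) {i t : ℕ} (hi : 1 ≤ i) (ht : 1 ≤ t) :
    A i < B t ↔ A i < i + t := by
  have := h.eq_add_valueCount hi
  rw [← not_le, ← le_valueCount_iff h.2.1 h.2.2.2.1 ht]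
  omega

theorem lt_iff_add_le (h : CompPair A B) {i t : ℕ} (hi : 1 ≤ i) (ht : 1 ≤ t) :
    B t < A i ↔ i + t ≤ A i := by
  rw [← not_lt, ← h.lt_iff_lt_add hi ht, not_lt]
  exact ⟨fun h' => h'.le, fun h' => lt_of_le_of_ne h' (h.ne hi ht).symm⟩

end CompPair

theorem add_sum_le_sum_succ_mul {k : ℕ} (a : Fin k → ℕ) (ha : ∀ j, 0 < a j) :
    k + ∑ j, a j ≤ ∑ j : Fin k, ((j : ℕ) + 1) * a j + 1 := by
  rcases k with _ | k
  · simp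
  have hlast : k * a (Fin.last k) ≤ ∑ j : Fin (k + 1), (j : ℕ) * a j := by
    simpa using single_le_sum (f := fun j : Fin (k + 1) => (j : ℕ) * a j)
      (fun _ _ => Nat.zero_le _) (mem_univ (Fin.last k))
  have hsplit : ∑ j : Fin (k + 1), ((j : ℕ) + 1) * a j =
      ∑ j : Fin (k + 1), (j : ℕ) * a j + ∑ j, a j := by
    rw [← sum_add_distrib]
    exact sum_congr rfl fun j _ => by ring
  have := Nat.le_mul_of_pos_right k (ha (Fin.last k))
  omega

namespace AntiRec

variable {k : ℕ} {a : Fin k → ℕ} {A B : ℕ → ℕ}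

local notation "τ" => ∑ j : Fin k, a j

theorem A_succ_eq_sum (h : AntiRec k a A B) (n : ℕ) :
    A (n + 1) = ∑ j : Fin k, a j * B (n * k + j + 1) := by
  simpa using h.2 (n + 1) (by omega)

theorem B_lt_A_succ (h : AntiRec k a A B) (hk : 1 < k) (ha : ∀ j, 0 < a j) (n : ℕ) :
    B (n * k + k) < A (n + 1) := by
  have hpair := add_le_sum (f := fun j : Fin k => a j * B (n * k + j + 1))
    (fun _ _ => Nat.zero_le _) (mem_univ ⟨0, by omega⟩) (mem_univ ⟨k - 1, by omega⟩)
    (by simp [Fin.ext_iff]; omega)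
  rw [← h.A_succ_eq_sum] at hpair
  simp only [add_zero] at hpair
  rw [show n * k + (k - 1) + 1 = n * k + k by omega] at hpair
  have := Nat.mul_pos (ha ⟨0, by omega⟩) (h.1.2.2.2.1 (n * k + 1) (by omega))
  have := Nat.le_mul_of_pos_left (B (n * k + k)) (ha ⟨k - 1, by omega⟩)
  omega

theorem A_succ_eq_add_valueCount (h : AntiRec k a A B) (n : ℕ) :
    A (n + 1) = τ * (n * k) + ∑ j : Fin k, ((j : ℕ) + 1) * a j +
      ∑ j : Fin k, a j * valueCount A (B (n * k + j + 1)) := by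
  rw [h.A_succ_eq_sum, sum_mul, ← sum_add_distrib, ← sum_add_distrib]
  refine sum_congr rfl fun j _ => ?_
  nth_rw 1 [h.1.symm.eq_add_valueCount (by omega : 1 ≤ n * k + j + 1)]
  ring

theorem A_one (h : AntiRec k a A B) (hk : 1 < k) (ha : ∀ j, 0 < a j) :
    A 1 = ∑ j : Fin k, ((j : ℕ) + 1) * a j := by
  have hzero (j : Fin k) : valueCount A (B (j + 1)) = 0 := by
    rw [← Nat.le_zero, valueCount_le_iff h.1.1 h.1.2.2.1]
    calc B (j + 1) ≤ B k :=
          h.1.2.1.monotoneOn (Set.mem_Ici.2 (by omega)) (Set.mem_Ici.2 (by omega)) (by omega)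
      _ < A 1 := by simpa using h.B_lt_A_succ hk ha 0
  simpa [hzero] using h.A_succ_eq_add_valueCount 0

theorem B_lt_A_of_add_le_A (h : AntiRec k a A B) (hk : 1 < k) (ha : ∀ j, 0 < a j) {n : ℕ}
    (hlow : ∀ i < n, (k * τ + 1) * i + k ≤ A (i + 1)) {i s : ℕ} (hs₁ : 1 ≤ s)
    (hs : s ≤ n * k + k) (his : i + 1 + s ≤ (k * τ + 1) * i + k) : B s < A (i + 1) := by
  rcases lt_or_ge i n with hin | hni
  · exact (h.1.lt_iff_add_le (by omega) hs₁).2 (his.trans (hlow i hin))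
  · calc B s ≤ B (n * k + k) :=
          h.1.2.1.monotoneOn (Set.mem_Ici.2 hs₁) (Set.mem_Ici.2 (by omega)) hs
      _ < A (n + 1) := h.B_lt_A_succ hk ha n
      _ ≤ A (i + 1) := h.1.1.monotoneOn (Set.mem_Ici.2 (by omega)) (Set.mem_Ici.2 (by omega))
          (by omega)

theorem valueCount_B_le_div_add_one (h : AntiRec k a A B) (hk : 1 < k) (ha : ∀ j, 0 < a j)
    {n : ℕ} (hlow : ∀ i < n, (k * τ + 1) * i + k ≤ A (i + 1)) (j : Fin k) :
    valueCount A (B (n * k + j + 1)) ≤ n / τ + 1 := by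
  rw [valueCount_le_iff h.1.1 h.1.2.2.1]
  refine h.B_lt_A_of_add_le_A hk ha hlow (by omega) (by omega) ?_
  have hτ : 0 < τ := sum_pos (fun j _ => ha j) ⟨⟨0, by omega⟩, mem_univ _⟩
  have hρ : k * (n % τ) + k ≤ k * τ := by
    rw [← Nat.mul_succ]
    exact Nat.mul_le_mul_left k (Nat.mod_lt n hτ)
  have hn : n * k = k * τ * (n / τ) + k * (n % τ) := by
    conv_lhs => rw [← Nat.div_add_mod n τ]
    ring
  have hexp : (k * τ + 1) * (n / τ + 1) = k * τ * (n / τ) + k * τ + n / τ + 1 := by ring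
  omega

theorem valueCount_B_le_div (h : AntiRec k a A B) (hk : 1 < k) (ha : ∀ j, 0 < a j) {n : ℕ}
    (hlow : ∀ i < n, (k * τ + 1) * i + k ≤ A (i + 1)) (hdvd : τ ∣ n) :
    valueCount A (B (n * k + 1)) ≤ n / τ := by
  rw [valueCount_le_iff h.1.1 h.1.2.2.1]
  refine h.B_lt_A_of_add_le_A hk ha hlow le_add_self (by omega) ?_
  have hn : n * k = k * τ * (n / τ) := by
    conv_lhs => rw [← Nat.mul_div_cancel' hdvd]
    ring
  have hexp : (k * τ + 1) * (n / τ) = k * τ * (n / τ) + n / τ := by ring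
  omega

theorem div_le_valueCount_B (h : AntiRec k a A B) {n : ℕ}
    (hup : ∀ i < n, A (i + 1) ≤ (k * τ + 1) * (i + 1)) (j : Fin k) :
    n / τ ≤ valueCount A (B (n * k + j + 1)) := by
  rcases hi : n / τ with _ | i
  · exact Nat.zero_le _
  rw [le_valueCount_iff h.1.1 h.1.2.2.1 (by omega)]
  have hτi : τ * (i + 1) ≤ n := hi ▸ Nat.mul_div_le n τ
  have hin : i < n := by
    have hτ : 0 < τ := Nat.pos_of_ne_zero fun h0 => by simp [h0] at hi
    have := Nat.le_mul_of_pos_left (i + 1) hτ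
    omega
  refine ((h.1.lt_iff_lt_add (by omega) (by omega)).2 ?_).le
  have := hup i hin
  have : k * (τ * (i + 1)) ≤ n * k := by rw [mul_comm n]; exact Nat.mul_le_mul_left k hτi
  have hexp : (k * τ + 1) * (i + 1) = k * (τ * (i + 1)) + i + 1 := by ring
  omega

theorem A_succ_bounds_of_forall_lt (h : AntiRec k a A B) (hk : 1 < k) (ha : ∀ j, 0 < a j)
    {n : ℕ}
    (hlow : ∀ i < n, (k * τ + 1) * i + k ≤ A (i + 1))
    (hup : ∀ i < n, A (i + 1) ≤ (k * τ + 1) * (i + 1)) :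
    (k * τ + 1) * n + A 1 < A (n + 1) + τ ∧ A (n + 1) < (k * τ + 1) * n + A 1 + τ := by
  have hτ : 0 < τ := sum_pos (fun j _ => ha j) ⟨⟨0, by omega⟩, mem_univ _⟩
  have hlo := lt_sum_mul_add_sum univ a (fun j => valueCount A (B (n * k + j + 1))) n hτ
    fun j _ => h.div_le_valueCount_B hup j
  have hhi := sum_mul_lt_add_sum univ a (fun j => valueCount A (B (n * k + j + 1))) n
    (fun j _ => h.valueCount_B_le_div_add_one hk ha hlow j)
    fun hdvd => ⟨⟨0, by omega⟩, mem_univ _, ha _, h.valueCount_B_le_div hk ha hlow hdvd⟩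
  have hexp : (k * τ + 1) * n = τ * (n * k) + n := by ring
  rw [h.A_succ_eq_add_valueCount n, ← h.A_one hk ha]
  omega

theorem A_succ_bounds (h : AntiRec k a A B) (hk : 1 < k) (ha : ∀ j, 0 < a j)
    (hbdd : A 1 + τ ≤ k * τ + 2) (n : ℕ) :
    (k * τ + 1) * n + A 1 < A (n + 1) + τ ∧ A (n + 1) < (k * τ + 1) * n + A 1 + τ := by
  induction n using Nat.strong_induction_on with
  | _ n ih =>
    have hA₁ := add_sum_le_sum_succ_mul a ha
    rw [← h.A_one hk ha] at hA₁
    refine h.A_succ_bounds_of_forall_lt hk ha (fun i hi => ?_) (fun i hi => ?_)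
    · have := (ih i hi).1
      omega
    · have := (ih i hi).2
      have hexp : (k * τ + 1) * (i + 1) = (k * τ + 1) * i + k * τ + 1 := by ring
      omega

end AntiRec

/-- For an A₁-bounded form, A n - κ(n-1) lies in [A 1 - τ + 1, A 1 + τ - 1]. -/
theorem stmt16 (k : ℕ) (hk : 1 < k) (a : Fin k → ℕ) (ha : ∀ j, 0 < a j)
    (A B : ℕ → ℕ) (h : AntiRec k a A B)
    (hbdd : (∑ j : Fin k, ((j : ℕ) + 1) * a j) ≤ (k - 1) * (∑ j : Fin k, a j) + 2) :
    ∀ n, 1 ≤ n →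
      (A 1 : ℤ) - (∑ j : Fin k, a j) + 1
          ≤ (A n : ℤ) - (k * (∑ j : Fin k, a j) + 1) * ((n : ℤ) - 1) ∧
      (A n : ℤ) - (k * (∑ j : Fin k, a j) + 1) * ((n : ℤ) - 1)
          ≤ (A 1 : ℤ) + (∑ j : Fin k, a j) - 1 := by
  intro n hn
  obtain ⟨n, rfl⟩ : ∃ m, n = m + 1 := ⟨n - 1, by omega⟩
  have hbdd' : A 1 + ∑ j, a j ≤ k * ∑ j, a j + 2 := by
    have : (k - 1) * ∑ j, a j + ∑ j, a j = k * ∑ j, a j := by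
      rw [← add_one_mul, Nat.sub_add_cancel (by omega)]
    rw [h.A_one hk ha]
    omega
  obtain ⟨hlo, hhi⟩ := h.A_succ_bounds hk ha hbdd' n
  zify at hlo hhi
  push_cast
  constructor <;> linarith
end
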